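/- Let r ≥ 1 and let z = (z₀, z₁, z₂, z₃) ∈ Mat(2r × 4r, ℂ) be written in blocks zᵢ ∈ Mat(2r × r, ℂ), and assume det(z₀ | z₁) ≠ 0. Then there exist g ∈ GL(2r, ℂ), h ∈ H_{(4)}, and x ∈ Mat(r×r, ℂ) such that g · z · h is the 2r×4r matrix with block rows (1_r, 0, 0, 0) and (0, 1_r, 0, x). -/

import Mathlib

open Matrix

/-- The `2r × nr` matrix assembled from `n` block columns of size `2r × r`. -/
def ofBlockCols (r n : ℕ) (z : Fin n → Matrix (Fin r ⊕ Fin r) (Fin r) ℂ) :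
    Matrix (Fin r ⊕ Fin r) (Fin n × Fin r) ℂ :=
  Matrix.of fun i jk => z jk.1 i jk.2

/-- The `nr × nr` matrix assembled from an `n × n` array of `r × r` blocks. -/
def ofBlockMat (r n : ℕ) (H : Fin n → Fin n → Matrix (Fin r) (Fin r) ℂ) :
    Matrix (Fin n × Fin r) (Fin n × Fin r) ℂ :=
  Matrix.of fun jk lk => H jk.1 lk.1 jk.2 lk.2

/-! `(z₀ | z₁)⁻¹` sends `z₀, z₁` to the standard block columns, and a unipotent `g` followed by the
Toeplitz matrix with `h₀ = 1` clears the remaining blocks column by column. Writing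
`(z₀ | z₁)⁻¹ z₂ = (a; b)` and `(z₀ | z₁)⁻¹ z₃ = (c; d)`, the choice `g = (1, b; 0, 1)`,
`h₁ = -b`, `h₂ = -a`, `h₃ = ba + ab + b³ - c - bd` leaves `x = d - a - b²`. -/

lemma Matrix.fromRows_add {R m₁ m₂ n : Type*} [Add R] (A₁ B₁ : Matrix m₁ n R)
    (A₂ B₂ : Matrix m₂ n R) :
    fromRows A₁ A₂ + fromRows B₁ B₂ = fromRows (A₁ + B₁) (A₂ + B₂) := by
  ext (_ | _) _ <;> rfl

section InvFromCols

variable {R n₁ n₂ : Type*} [CommRing R] [Fintype n₁] [Fintype n₂] [DecidableEq n₁]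
  [DecidableEq n₂] (z₀ : Matrix (n₁ ⊕ n₂) n₁ R) (z₁ : Matrix (n₁ ⊕ n₂) n₂ R)

lemma Matrix.inv_fromCols_mul_left (h : IsUnit (fromCols z₀ z₁).det) :
    (fromCols z₀ z₁)⁻¹ * z₀ = fromRows 1 0 := by
  calc _ = (fromCols z₀ z₁)⁻¹ * (fromCols z₀ z₁ * fromRows 1 0) := by
        simp [fromCols_mul_fromRows]
    _ = _ := nonsing_inv_mul_cancel_left _ _ h

lemma Matrix.inv_fromCols_mul_right (h : IsUnit (fromCols z₀ z₁).det) :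
    (fromCols z₀ z₁)⁻¹ * z₁ = fromRows 0 1 := by
  calc _ = (fromCols z₀ z₁)⁻¹ * (fromCols z₀ z₁ * fromRows 0 1) := by
        simp [fromCols_mul_fromRows]
    _ = _ := nonsing_inv_mul_cancel_left _ _ h

end InvFromCols

section BlockColumns

variable {r n : ℕ}

lemma mul_ofBlockCols (g : Matrix (Fin r ⊕ Fin r) (Fin r ⊕ Fin r) ℂ)
    (z : Fin n → Matrix (Fin r ⊕ Fin r) (Fin r) ℂ) :
    g * ofBlockCols r n z = ofBlockCols r n (fun j => g * z j) := by
  ext i ⟨j, k⟩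
  simp [ofBlockCols, mul_apply]

lemma ofBlockCols_mul_ofBlockMat (z : Fin n → Matrix (Fin r ⊕ Fin r) (Fin r) ℂ)
    (H : Fin n → Fin n → Matrix (Fin r) (Fin r) ℂ) :
    ofBlockCols r n z * ofBlockMat r n H = ofBlockCols r n (fun l => ∑ j, z j * H j l) := by
  ext i ⟨l, k⟩
  simp [ofBlockCols, ofBlockMat, mul_apply, Matrix.sum_apply, Fintype.sum_prod_type]

end BlockColumns

def jordanBlocks4 {α : Type*} [Zero α] (h₀ h₁ h₂ h₃ : α) : Fin 4 → Fin 4 → α :=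
  ![![h₀, h₁, h₂, h₃], ![0, h₀, h₁, h₂], ![0, 0, h₀, h₁], ![0, 0, 0, h₀]]

lemma ofBlockCols_mul_jordanBlocks4 {r : ℕ} (w : Fin 4 → Matrix (Fin r ⊕ Fin r) (Fin r) ℂ)
    (h₀ h₁ h₂ h₃ : Matrix (Fin r) (Fin r) ℂ) :
    ofBlockCols r 4 w * ofBlockMat r 4 (jordanBlocks4 h₀ h₁ h₂ h₃) =
      ofBlockCols r 4 ![w 0 * h₀, w 0 * h₁ + w 1 * h₀, w 0 * h₂ + w 1 * h₁ + w 2 * h₀,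
        w 0 * h₃ + w 1 * h₂ + w 2 * h₁ + w 3 * h₀] := by
  rw [ofBlockCols_mul_ofBlockMat]
  congr 1
  funext l
  fin_cases l <;> simp [Fin.sum_univ_four, jordanBlocks4]

lemma normal_form_of_standard_first_cols {r : ℕ} (a b c d : Matrix (Fin r) (Fin r) ℂ) :
    (fromBlocks 1 b 0 1 : Matrix (Fin r ⊕ Fin r) (Fin r ⊕ Fin r) ℂ) *
        ofBlockCols r 4 ![fromRows 1 0, fromRows 0 1, fromRows a b, fromRows c d] *
        ofBlockMat r 4 (jordanBlocks4 1 (-b) (-a) (b * a + a * b + b * b * b - c - b * d)) =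
      ofBlockCols r 4 ![fromRows 1 0, fromRows 0 1, 0, fromRows 0 (d - a - b * b)] := by
  rw [mul_ofBlockCols, ofBlockCols_mul_jordanBlocks4]
  congr 1
  funext l
  fin_cases l <;>
    simp only [Fin.zero_eta, Fin.mk_one, Fin.reduceFinMk, cons_val, fromBlocks_mul_fromRows,
      fromRows_mul, fromRows_add, ← fromRows_zero, fromRows_ext_iff] <;>
    constructor <;> noncomm_ring

theorem normal_form_partition_4_general (r : ℕ)
    (z : Fin 4 → Matrix (Fin r ⊕ Fin r) (Fin r) ℂ)
    (h01 : (fromCols (z 0) (z 1)).det ≠ 0) :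
    ∃ (g : GL (Fin r ⊕ Fin r) ℂ) (h₀ : GL (Fin r) ℂ)
      (h₁ h₂ h₃ : Matrix (Fin r) (Fin r) ℂ) (x : Matrix (Fin r) (Fin r) ℂ),
      (g : Matrix (Fin r ⊕ Fin r) (Fin r ⊕ Fin r) ℂ) * ofBlockCols r 4 z *
          ofBlockMat r 4
            ![![(h₀ : Matrix (Fin r) (Fin r) ℂ), h₁, h₂, h₃],
              ![0, (h₀ : Matrix (Fin r) (Fin r) ℂ), h₁, h₂],
              ![0, 0, (h₀ : Matrix (Fin r) (Fin r) ℂ), h₁],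
              ![0, 0, 0, (h₀ : Matrix (Fin r) (Fin r) ℂ)]] =
        ofBlockCols r 4
          ![fromRows 1 0, fromRows 0 1, 0, fromRows 0 x] := by
  set A := fromCols (z 0) (z 1)
  have hA : IsUnit A.det := h01.isUnit
  set a := (A⁻¹ * z 2).toRows₁
  set b := (A⁻¹ * z 2).toRows₂
  set c := (A⁻¹ * z 3).toRows₁
  set d := (A⁻¹ * z 3).toRows₂
  have hz : (fun j => A⁻¹ * z j) =
      ![fromRows 1 0, fromRows 0 1, fromRows a b, fromRows c d] := by
    funext j
    fin_cases j
    exacts [inv_fromCols_mul_left _ _ hA, inv_fromCols_mul_right _ _ hA,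
      (fromRows_toRows _).symm, (fromRows_toRows _).symm]
  set U : Matrix (Fin r ⊕ Fin r) (Fin r ⊕ Fin r) ℂ := fromBlocks 1 b 0 1
  have hg : (U * A⁻¹).det ≠ 0 := by
    simp [U, hA.ne_zero]
  refine ⟨.mkOfDetNeZero _ hg, 1, -b, -a, b * a + a * b + b * b * b - c - b * d,
    d - a - b * b, ?_⟩
  change U * A⁻¹ * ofBlockCols r 4 z *
    ofBlockMat r 4 (jordanBlocks4 1 (-b) (-a) (b * a + a * b + b * b * b - c - b * d)) = _
  rw [Matrix.mul_assoc U, mul_ofBlockCols, hz, normal_form_of_standard_first_cols]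

/-- Normal form lemma for `(m, N) = (2r, 4r)`, partition `λ = (4)`:
`z = (z₀, z₁, z₂, z₃)` with `det(z₀ | z₁) ≠ 0` can be brought, by the action of
`GL(2r, ℂ) × H_{(4)}` (the generalized Jordan group `J_r(4)`), to the normal form
with block rows `(1_r, 0, 0, 0)` and `(0, 1_r, 0, x)`. -/
theorem normal_form_partition_4 (r : ℕ) (hr : 1 ≤ r)
    (z : Fin 4 → Matrix (Fin r ⊕ Fin r) (Fin r) ℂ)
    (h01 : (fromCols (z 0) (z 1)).det ≠ 0) :
    ∃ (g : GL (Fin r ⊕ Fin r) ℂ) (h₀ : GL (Fin r) ℂ)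
      (h₁ h₂ h₃ : Matrix (Fin r) (Fin r) ℂ) (x : Matrix (Fin r) (Fin r) ℂ),
      (g : Matrix (Fin r ⊕ Fin r) (Fin r ⊕ Fin r) ℂ) * ofBlockCols r 4 z *
          ofBlockMat r 4
            ![![(h₀ : Matrix (Fin r) (Fin r) ℂ), h₁, h₂, h₃],
              ![0, (h₀ : Matrix (Fin r) (Fin r) ℂ), h₁, h₂],
              ![0, 0, (h₀ : Matrix (Fin r) (Fin r) ℂ), h₁],
              ![0, 0, 0, (h₀ : Matrix (Fin r) (Fin r) ℂ)]] =
        ofBlockCols r 4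
          ![fromRows 1 0, fromRows 0 1, 0, fromRows 0 x] :=
  normal_form_partition_4_general r z h01
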